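/- arXiv:2407.15820 — 5 statements merged into one kernel-verified Lean document; each statement's English description precedes it below -/
import Mathlib

section
/- Let S be a nonempty finite set, let p, q ∈ ℝ^S be stochastic vectors (nonnegative entries summing to 1), and let V, W ∈ ℝ^S be real vectors. Then Σ_{s∈S} p(s)V(s) − Σ_{s∈S} q(s)W(s) ≤ (1/2) · ||p − q||_1 · max_{s,s'∈S} |V(s) − V(s')| + max_{s∈S} |V(s) − W(s)|. -/
open Finset

/-- Given stochastic vectors `p, q` on a nonempty finite set `S` and real vectors
`V, W`, `p·V − q·W ≤ (1/2) ‖p − q‖₁ · max_{s,s'} |V s − V s'| + max_s |V s − W s|`. -/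
theorem stochastic_vector_dot_diff_two_vectors_le
    {S : Type*} [Fintype S] [Nonempty S]
    (p q V W : S → ℝ)
    (hp0 : ∀ s, 0 ≤ p s) (hp1 : ∑ s, p s = 1)
    (hq0 : ∀ s, 0 ≤ q s) (hq1 : ∑ s, q s = 1) :
    ∑ s, p s * V s - ∑ s, q s * W s ≤
      (1 / 2) * (∑ s, |p s - q s|) *
        ((Finset.univ : Finset (S × S)).sup' Finset.univ_nonempty
          (fun pr => |V pr.1 - V pr.2|))
      + (Finset.univ.sup' Finset.univ_nonempty (fun s => |V s - W s|)) := by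
  set M : ℝ := (Finset.univ : Finset (S × S)).sup' Finset.univ_nonempty
      (fun pr => |V pr.1 - V pr.2|) with hMdef
  set N : ℝ := Finset.univ.sup' Finset.univ_nonempty (fun s => |V s - W s|) with hNdef
  have hM : ∀ s t : S, |V s - V t| ≤ M := fun s t =>
    Finset.le_sup' (f := fun pr : S × S => |V pr.1 - V pr.2|) (Finset.mem_univ (s, t))
  have hN : ∀ s : S, |V s - W s| ≤ N := fun s =>
    Finset.le_sup' (f := fun s => |V s - W s|) (Finset.mem_univ s)
  set vmax : ℝ := Finset.univ.sup' Finset.univ_nonempty V with hvmax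
  set vmin : ℝ := Finset.univ.inf' Finset.univ_nonempty V with hvmin
  have hle : ∀ s, V s ≤ vmax := fun s => Finset.le_sup' V (Finset.mem_univ s)
  have hge : ∀ s, vmin ≤ V s := fun s => Finset.inf'_le V (Finset.mem_univ s)
  have hdiff : vmax - vmin ≤ M := by
    obtain ⟨s1, _, h1⟩ := Finset.exists_mem_eq_sup' (Finset.univ_nonempty) V
    obtain ⟨s2, _, h2⟩ := Finset.exists_mem_eq_inf' (Finset.univ_nonempty) V
    calc vmax - vmin = V s1 - V s2 := by rw [hvmax, hvmin, h1, h2]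
      _ ≤ |V s1 - V s2| := le_abs_self _
      _ ≤ M := hM s1 s2
  set c : ℝ := (vmax + vmin) / 2 with hc
  have hVc : ∀ s, |V s - c| ≤ M / 2 := by
    intro s
    rw [abs_le]
    constructor
    · have := hge s; rw [hc]; linarith
    · have := hle s; rw [hc]; linarith
  have hsplit : ∑ s, p s * V s - ∑ s, q s * W s =
      (∑ s, (p s - q s) * (V s - c)) + ∑ s, q s * (V s - W s) := by
    have h1 : ∑ s, (p s - q s) * (V s - c)
        = ∑ s, p s * V s - ∑ s, q s * V s - c * (∑ s, p s - ∑ s, q s) := by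
      rw [← Finset.sum_sub_distrib, ← Finset.sum_sub_distrib, Finset.mul_sum,
        ← Finset.sum_sub_distrib]
      apply Finset.sum_congr rfl
      intro s _; ring
    have h2 : ∑ s, q s * (V s - W s) = ∑ s, q s * V s - ∑ s, q s * W s := by
      rw [← Finset.sum_sub_distrib]
      exact Finset.sum_congr rfl fun s _ => by ring
    rw [h1, h2, hp1, hq1]; ring
  rw [hsplit]
  have hb1 : ∑ s, (p s - q s) * (V s - c) ≤ (1 / 2) * (∑ s, |p s - q s|) * M := by
    calc ∑ s, (p s - q s) * (V s - c) ≤ ∑ s, |p s - q s| * (M / 2) := by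
          apply Finset.sum_le_sum
          intro s _
          calc (p s - q s) * (V s - c) ≤ |(p s - q s) * (V s - c)| := le_abs_self _
            _ = |p s - q s| * |V s - c| := abs_mul _ _
            _ ≤ |p s - q s| * (M / 2) :=
                mul_le_mul_of_nonneg_left (hVc s) (abs_nonneg _)
      _ = (1 / 2) * (∑ s, |p s - q s|) * M := by
          rw [← Finset.sum_mul]; ring
  have hb2 : ∑ s, q s * (V s - W s) ≤ N := by
    calc ∑ s, q s * (V s - W s) ≤ ∑ s, q s * N := by
          apply Finset.sum_le_sum
          intro s _
          exact mul_le_mul_of_nonneg_left ((le_abs_self _).trans (hN s)) (hq0 s)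
      _ = N := by rw [← Finset.sum_mul, hq1, one_mul]
  linarith
end

section
/- (Horizon-sensitive transition probabilities distance.) Let γ, γ_Bw be discount factors with 0 ≤ γ ≤ γ_Bw < 1, let π*_γ be an optimal policy for discount γ and π*_{Bw} an optimal policy for discount γ_Bw, and let δ = δ(π*_γ, π*_{Bw}) be their discordant action variation. Then for every state s and every integer k ≥ 1, the ℓ1 distance between the k-step transition distributions from s under the two policies satisfies ||e_s^T P_{π*_γ}^k − e_s^T P_{π*_{Bw}}^k||_1 ≤ 2 − 2(1 − δ/2)^k. -/
open Finset

noncomputable section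

private lemma abs_sub_eq_add_sub_two_min (a b : ℝ) : |a - b| = a + b - 2 * min a b := by
  rcases le_total a b with h | h
  · rw [abs_of_nonpos (by linarith), min_eq_left h]; ring
  · rw [abs_of_nonneg (by linarith), min_eq_right h]; ring

private lemma matpow_nonneg {S : Type*} [Fintype S] [DecidableEq S]
    (M : Matrix S S ℝ) (h : ∀ s s', 0 ≤ M s s') :
    ∀ (k : ℕ) (s s' : S), 0 ≤ (M ^ k) s s' := by
  intro k
  induction k with
  | zero => intro s s'; simp only [pow_zero, Matrix.one_apply]; positivity
  | succ k ih =>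
    intro s s'
    rw [pow_succ, Matrix.mul_apply]
    exact Finset.sum_nonneg fun t _ => mul_nonneg (ih s t) (h t s')

private lemma matpow_row_sum {S : Type*} [Fintype S] [DecidableEq S]
    (M : Matrix S S ℝ) (h : ∀ s, ∑ s', M s s' = 1) :
    ∀ (k : ℕ) (s : S), ∑ s', (M ^ k) s s' = 1 := by
  intro k
  induction k with
  | zero => intro s; simp [Matrix.one_apply]
  | succ k ih =>
    intro s
    simp only [pow_succ, Matrix.mul_apply]
    rw [Finset.sum_comm]
    simp only [← Finset.mul_sum, h]
    simpa using ih s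

/-- Transition matrix of a policy `π` in an MDP with transition function `P`. -/
def polMatrix {S A : Type*} [Fintype S] [DecidableEq S] (P : S → A → S → ℝ) (π : S → A) :
    Matrix S S ℝ :=
  fun s s' => P s (π s) s'

/-- Reward vector of a policy `π` for a reward function `R`. -/
def polReward {S A : Type*} (R : S → A → ℝ) (π : S → A) : S → ℝ :=
  fun s => R s (π s)

/-- Value vector of a policy: `V_γ^π = Σ_{k=0}^∞ γ^k P_π^k R_π`. -/
def valueVec {S A : Type*} [Fintype S] [DecidableEq S] (P : S → A → S → ℝ) (R : S → A → ℝ)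
    (γ : ℝ) (π : S → A) : S → ℝ :=
  ∑' k : ℕ, γ ^ k • ((polMatrix P π ^ k).mulVec (polReward R π))

/-- A policy `π⋆` is optimal for discount `γ` if it dominates every policy in every state. -/
def IsOptimalPolicy {S A : Type*} [Fintype S] [DecidableEq S] (P : S → A → S → ℝ) (R : S → A → ℝ)
    (γ : ℝ) (πstar : S → A) : Prop :=
  ∀ (π : S → A) (s : S), valueVec P R γ π s ≤ valueVec P R γ πstar s

/-- Discordant action variation of two policies:
`max_{s : π s ≠ π' s} ‖P(·|s, π s) − P(·|s, π' s)‖₁`, taken to be `0` when `π = π'`. -/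
def discordantVar {S A : Type*} [Fintype S] [DecidableEq S] [DecidableEq A]
    (P : S → A → S → ℝ) (π π' : S → A) : ℝ :=
  Finset.fold max 0 (fun s => ∑ s', |P s (π s) s' - P s (π' s) s'|)
    (Finset.univ.filter fun s => π s ≠ π' s)

/-- **Horizon-sensitive transition probabilities distance.**
If `π⋆γ` is optimal for discount `γ` and `π⋆Bw` is optimal for discount `γBw`, with
`δ = δ(π⋆γ, π⋆Bw)` the discordant action variation, then for every state `s` and `k ≥ 1`,
`‖e_s^T P_{π⋆γ}^k − e_s^T P_{π⋆Bw}^k‖₁ ≤ 2 − 2 (1 − δ/2)^k`. -/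
theorem horizon_sensitive_transition_distance
    {S A : Type*} [Fintype S] [DecidableEq S] [Nonempty S] [Fintype A] [Nonempty A] [DecidableEq A]
    (P : S → A → S → ℝ) (R : S → A → ℝ) (Rmax : ℝ)
    (hP0 : ∀ s a s', 0 ≤ P s a s') (hP1 : ∀ s a, ∑ s', P s a s' = 1)
    (hRmax : 0 ≤ Rmax) (hR0 : ∀ s a, 0 ≤ R s a) (hR1 : ∀ s a, R s a ≤ Rmax)
    (γ γBw : ℝ) (hγ0 : 0 ≤ γ) (hγγBw : γ ≤ γBw) (hγBw1 : γBw < 1)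
    (πγ πBw : S → A)
    (hπγ : IsOptimalPolicy P R γ πγ) (hπBw : IsOptimalPolicy P R γBw πBw) :
    ∀ (s : S) (k : ℕ), 1 ≤ k →
      ∑ s', |(polMatrix P πγ ^ k) s s' - (polMatrix P πBw ^ k) s s'| ≤
        2 - 2 * (1 - discordantVar P πγ πBw / 2) ^ k := by
  intro s k _
  set M := polMatrix P πγ with hM
  set N := polMatrix P πBw with hN
  set δ := discordantVar P πγ πBw with hδdef
  have hδ0 : (0:ℝ) ≤ δ := by
    rw [hδdef]; unfold discordantVar
    exact (Finset.le_fold_max _).mpr (Or.inl le_rfl)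
  have hrow : ∀ t, ∑ s', |M t s' - N t s'| ≤ δ := by
    intro t
    by_cases h : πγ t = πBw t
    · have hz : ∀ s', M t s' - N t s' = 0 := by
        intro s'; simp [hM, hN, polMatrix, h]
      calc ∑ s', |M t s' - N t s'| = 0 := by simp [hz]
        _ ≤ δ := hδ0
    · rw [hδdef]; unfold discordantVar
      exact (Finset.le_fold_max _).mpr
        (Or.inr ⟨t, Finset.mem_filter.mpr ⟨Finset.mem_univ t, h⟩, le_rfl⟩)
  have hMnn : ∀ s s', 0 ≤ M s s' := fun s s' => hP0 _ _ _
  have hNnn : ∀ s s', 0 ≤ N s s' := fun s s' => hP0 _ _ _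
  have hMsum : ∀ s, ∑ s', M s s' = 1 := fun s => hP1 _ _
  have hNsum : ∀ s, ∑ s', N s s' = 1 := fun s => hP1 _ _
  -- one-step min row sum bound
  have honestep : ∀ t, 1 - δ / 2 ≤ ∑ s', min (M t s') (N t s') := by
    intro t
    have h1 : ∑ s', |M t s' - N t s'|
        = 2 - 2 * ∑ s', min (M t s') (N t s') := by
      rw [Finset.sum_congr rfl fun s' _ => abs_sub_eq_add_sub_two_min (M t s') (N t s')]
      rw [Finset.sum_sub_distrib, Finset.sum_add_distrib, hMsum, hNsum, ← Finset.mul_sum]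
      ring
    have := hrow t
    linarith
  have hδ2 : δ ≤ 2 := by
    rw [hδdef]; unfold discordantVar
    refine (Finset.fold_max_le _).mpr ⟨by norm_num, fun t _ => ?_⟩
    calc ∑ s', |P t (πγ t) s' - P t (πBw t) s'|
        ≤ ∑ s', (P t (πγ t) s' + P t (πBw t) s') := by
          refine Finset.sum_le_sum fun s' _ => abs_le.mpr ⟨?_, ?_⟩
          · linarith [hP0 t (πγ t) s', hP0 t (πBw t) s']
          · linarith [hP0 t (πγ t) s', hP0 t (πBw t) s']
      _ = 2 := by rw [Finset.sum_add_distrib, hP1, hP1]; norm_num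
  have h12 : (0:ℝ) ≤ 1 - δ / 2 := by linarith
  -- key induction
  have key : ∀ (k : ℕ) (s : S),
      (1 - δ / 2) ^ k ≤ ∑ s', min ((M ^ k) s s') ((N ^ k) s s') := by
    intro k
    induction k with
    | zero => intro s; simp [Matrix.one_apply]
    | succ k ih =>
      intro s
      have hMk : ∀ t, 0 ≤ (M ^ k) s t := fun t => matpow_nonneg M hMnn k s t
      have hNk : ∀ t, 0 ≤ (N ^ k) s t := fun t => matpow_nonneg N hNnn k s t
      calc (1 - δ / 2) ^ (k + 1) = (1 - δ / 2) ^ k * (1 - δ / 2) := by ring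
        _ ≤ (∑ t, min ((M ^ k) s t) ((N ^ k) s t)) * (1 - δ / 2) :=
            mul_le_mul_of_nonneg_right (ih s) h12
        _ = ∑ t, min ((M ^ k) s t) ((N ^ k) s t) * (1 - δ / 2) := Finset.sum_mul _ _ _
        _ ≤ ∑ t, min ((M ^ k) s t) ((N ^ k) s t) * ∑ s', min (M t s') (N t s') := by
            refine Finset.sum_le_sum fun t _ => ?_
            exact mul_le_mul_of_nonneg_left (honestep t) (le_min (hMk t) (hNk t))
        _ = ∑ t, ∑ s', min ((M ^ k) s t) ((N ^ k) s t) * min (M t s') (N t s') := by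
            simp [Finset.mul_sum]
        _ ≤ ∑ t, ∑ s', min ((M ^ k) s t * M t s') ((N ^ k) s t * N t s') := by
            refine Finset.sum_le_sum fun t _ => Finset.sum_le_sum fun s' _ => ?_
            exact le_min
              (mul_le_mul (min_le_left _ _) (min_le_left _ _)
                (le_min (hMnn t s') (hNnn t s')) (hMk t))
              (mul_le_mul (min_le_right _ _) (min_le_right _ _)
                (le_min (hMnn t s') (hNnn t s')) (hNk t))
        _ = ∑ s', ∑ t, min ((M ^ k) s t * M t s') ((N ^ k) s t * N t s') :=
            Finset.sum_comm
        _ ≤ ∑ s', min ((M ^ (k + 1)) s s') ((N ^ (k + 1)) s s') := by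
            refine Finset.sum_le_sum fun s' _ => ?_
            rw [pow_succ, pow_succ, Matrix.mul_apply, Matrix.mul_apply]
            exact le_min
              (le_trans (Finset.sum_le_sum fun t _ => min_le_left _ _) le_rfl)
              (le_trans (Finset.sum_le_sum fun t _ => min_le_right _ _) le_rfl)
  have hfin : ∑ s', |(M ^ k) s s' - (N ^ k) s s'|
      = 2 - 2 * ∑ s', min ((M ^ k) s s') ((N ^ k) s s') := by
    rw [Finset.sum_congr rfl fun s' _ =>
      abs_sub_eq_add_sub_two_min ((M ^ k) s s') ((N ^ k) s s')]
    rw [Finset.sum_sub_distrib, Finset.sum_add_distrib,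
      matpow_row_sum M hMsum k s, matpow_row_sum N hNsum k s, ← Finset.mul_sum]
    ring
  have := key k s
  rw [hfin]
  linarith
end
end

section
/- (Empirical transition probabilities distance.) Let M and M̂ be two finite MDPs sharing the same state space S and action space A, with transition functions P and P̂ respectively. Fix a discount factor γ ∈ [0,1), let π* be an optimal policy for M at discount γ and π̂ an optimal policy for M̂ at discount γ, and let δ̂ = δ_M(π*, π̂) be their discordant action variation computed with the transitions P of M. Then for every state s and every integer k ≥ 1, the k-step transition distributions in M satisfy ||e_s^T P_{π*}^k − e_s^T P_{π̂}^k||_1 ≤ 2 − 2(1 − δ̂/2)^k. -/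
open Finset

noncomputable section

private lemma stepBound {S : Type*} [Fintype S] [DecidableEq S]
    (μ ν : S → ℝ) (T T' : Matrix S S ℝ) (δ : ℝ)
    (hμ0 : ∀ t, 0 ≤ μ t) (hν0 : ∀ t, 0 ≤ ν t)
    (hμ1 : ∑ t, μ t = 1) (hν1 : ∑ t, ν t = 1)
    (hT0 : ∀ t s', 0 ≤ T t s') (hT'0 : ∀ t s', 0 ≤ T' t s')
    (hT1 : ∀ t, ∑ s', T t s' = 1) (hT'1 : ∀ t, ∑ s', T' t s' = 1)
    (hrow : ∀ t, ∑ s', |T t s' - T' t s'| ≤ δ) :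
    ∑ s', |∑ t, μ t * T t s' - ∑ t, ν t * T' t s'| ≤
      (∑ t, |μ t - ν t|) + (1 - (∑ t, |μ t - ν t|) / 2) * δ := by
  set ρ : S → ℝ := fun t => min (μ t) (ν t) with hρ
  have hρ0 : ∀ t, 0 ≤ ρ t := fun t => le_min (hμ0 t) (hν0 t)
  have hμρ : ∀ t, 0 ≤ μ t - ρ t := fun t => by simp [hρ, min_le_left]
  have hνρ : ∀ t, 0 ≤ ν t - ρ t := fun t => by simp [hρ, min_le_right]
  have habs : ∀ t, (μ t - ρ t) + (ν t - ρ t) = |μ t - ν t| := by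
    intro t
    have h1 := max_add_min (μ t) (ν t)
    have h2 := max_sub_min_eq_abs (μ t) (ν t)
    have h3 : |μ t - ν t| = |ν t - μ t| := abs_sub_comm _ _
    simp only [hρ]; linarith
  have hsumabs : ∑ t, ((μ t - ρ t) + (ν t - ρ t)) = ∑ t, |μ t - ν t| := by
    exact Finset.sum_congr rfl fun t _ => habs t
  have hρsum : ∑ t, ρ t = 1 - (∑ t, |μ t - ν t|) / 2 := by
    have := hsumabs
    rw [Finset.sum_add_distrib, Finset.sum_sub_distrib, Finset.sum_sub_distrib,
      hμ1, hν1] at this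
    linarith
  have key : ∀ s', |∑ t, μ t * T t s' - ∑ t, ν t * T' t s'| ≤
      ∑ t, (ρ t * |T t s' - T' t s'| + (μ t - ρ t) * T t s' + (ν t - ρ t) * T' t s') := by
    intro s'
    have hrw : ∑ t, μ t * T t s' - ∑ t, ν t * T' t s' =
        ∑ t, (ρ t * (T t s' - T' t s') + ((μ t - ρ t) * T t s' - (ν t - ρ t) * T' t s')) := by
      rw [← Finset.sum_sub_distrib]
      exact Finset.sum_congr rfl fun t _ => by ring
    rw [hrw]
    refine (Finset.abs_sum_le_sum_abs _ _).trans (Finset.sum_le_sum fun t _ => ?_)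
    have h1 : |ρ t * (T t s' - T' t s') + ((μ t - ρ t) * T t s' - (ν t - ρ t) * T' t s')| ≤
        |ρ t * (T t s' - T' t s')| + |(μ t - ρ t) * T t s' - (ν t - ρ t) * T' t s'| :=
      abs_add_le _ _
    have h2 : |ρ t * (T t s' - T' t s')| = ρ t * |T t s' - T' t s'| := by
      rw [abs_mul, abs_of_nonneg (hρ0 t)]
    have h3 : |(μ t - ρ t) * T t s' - (ν t - ρ t) * T' t s'| ≤
        (μ t - ρ t) * T t s' + (ν t - ρ t) * T' t s' := by
      have ha : 0 ≤ (μ t - ρ t) * T t s' := mul_nonneg (hμρ t) (hT0 t s')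
      have hb : 0 ≤ (ν t - ρ t) * T' t s' := mul_nonneg (hνρ t) (hT'0 t s')
      rw [abs_sub_le_iff]; constructor <;> linarith
    linarith
  calc ∑ s', |∑ t, μ t * T t s' - ∑ t, ν t * T' t s'|
      ≤ ∑ s', ∑ t, (ρ t * |T t s' - T' t s'| + (μ t - ρ t) * T t s' + (ν t - ρ t) * T' t s') :=
        Finset.sum_le_sum fun s' _ => key s'
    _ = ∑ t, (ρ t * (∑ s', |T t s' - T' t s'|) + (μ t - ρ t) * (∑ s', T t s')
          + (ν t - ρ t) * (∑ s', T' t s')) := by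
        rw [Finset.sum_comm]
        exact Finset.sum_congr rfl fun t _ => by
          rw [Finset.sum_add_distrib, Finset.sum_add_distrib, ← Finset.mul_sum,
            ← Finset.mul_sum, ← Finset.mul_sum]
    _ ≤ ∑ t, (ρ t * δ + (μ t - ρ t) + (ν t - ρ t)) := by
        refine Finset.sum_le_sum fun t _ => ?_
        have := mul_le_mul_of_nonneg_left (hrow t) (hρ0 t)
        rw [hT1 t, hT'1 t]; linarith
    _ = (∑ t, ρ t) * δ + ∑ t, ((μ t - ρ t) + (ν t - ρ t)) := by
        simp only [Finset.sum_add_distrib, ← Finset.sum_mul]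
        ring
    _ = (∑ t, |μ t - ν t|) + (1 - (∑ t, |μ t - ν t|) / 2) * δ := by
        rw [hρsum, hsumabs]; ring


private lemma powEntryNonneg {S : Type*} [Fintype S] [DecidableEq S]
    (M : Matrix S S ℝ) (h0 : ∀ s s', 0 ≤ M s s') :
    ∀ k s s', 0 ≤ (M ^ k) s s' := by
  intro k
  induction k with
  | zero => intro s s'; simp [Matrix.one_apply]; positivity
  | succ k ih =>
    intro s s'
    rw [pow_succ, Matrix.mul_apply]
    exact Finset.sum_nonneg fun t _ => mul_nonneg (ih s t) (h0 t s')

private lemma powRowSum {S : Type*} [Fintype S] [DecidableEq S]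
    (M : Matrix S S ℝ) (h1 : ∀ s, ∑ s', M s s' = 1) :
    ∀ k s, ∑ s', (M ^ k) s s' = 1 := by
  intro k
  induction k with
  | zero => intro s; simp [Matrix.one_apply]
  | succ k ih =>
    intro s
    simp only [pow_succ, Matrix.mul_apply]
    rw [Finset.sum_comm]
    calc ∑ t, ∑ s', (M ^ k) s t * M t s' = ∑ t, (M ^ k) s t * ∑ s', M t s' := by
          simp [Finset.mul_sum]
      _ = 1 := by simp only [h1, mul_one]; exact ih s

/-- **Empirical transition probabilities distance.**
Let `M = (P, R)` and `M̂ = (P̂, R̂)` share the same state and action spaces. If `π⋆` is optimal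
for `M` at discount `γ`, `π̂` is optimal for `M̂` at discount `γ`, and
`δ̂ = δ_M(π⋆, π̂)` is their discordant action variation computed with the transitions `P` of `M`,
then for every state `s` and `k ≥ 1`, the `k`-step transition distributions in `M` satisfy
`‖e_s^T P_{π⋆}^k − e_s^T P_{π̂}^k‖₁ ≤ 2 − 2 (1 − δ̂/2)^k`. -/
theorem empirical_transition_distance
    {S A : Type*} [Fintype S] [DecidableEq S] [Nonempty S] [Fintype A] [Nonempty A] [DecidableEq A]
    (P Phat : S → A → S → ℝ) (R Rhat : S → A → ℝ) (Rmax Rmaxhat : ℝ)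
    (hP0 : ∀ s a s', 0 ≤ P s a s') (hP1 : ∀ s a, ∑ s', P s a s' = 1)
    (hPhat0 : ∀ s a s', 0 ≤ Phat s a s') (hPhat1 : ∀ s a, ∑ s', Phat s a s' = 1)
    (hRmax : 0 ≤ Rmax) (hR0 : ∀ s a, 0 ≤ R s a) (hR1 : ∀ s a, R s a ≤ Rmax)
    (hRmaxhat : 0 ≤ Rmaxhat) (hRhat0 : ∀ s a, 0 ≤ Rhat s a) (hRhat1 : ∀ s a, Rhat s a ≤ Rmaxhat)
    (γ : ℝ) (hγ0 : 0 ≤ γ) (hγ1 : γ < 1)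
    (πstar πhat : S → A)
    (hπstar : IsOptimalPolicy P R γ πstar) (hπhat : IsOptimalPolicy Phat Rhat γ πhat) :
    ∀ (s : S) (k : ℕ), 1 ≤ k →
      ∑ s', |(polMatrix P πstar ^ k) s s' - (polMatrix P πhat ^ k) s s'| ≤
        2 - 2 * (1 - discordantVar P πstar πhat / 2) ^ k := by
  set δ := discordantVar P πstar πhat with hδ
  set Astar := polMatrix P πstar with hA
  set Bhat := polMatrix P πhat with hB
  have hδ0 : 0 ≤ δ := (Finset.le_fold_max 0).mpr (Or.inl le_rfl)
  have hrow : ∀ t, ∑ s', |Astar t s' - Bhat t s'| ≤ δ := by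
    intro t
    by_cases h : πstar t = πhat t
    · have : ∑ s', |Astar t s' - Bhat t s'| = 0 := by
        simp [hA, hB, polMatrix, h]
      rw [this]; exact hδ0
    · exact (Finset.le_fold_max _).mpr (Or.inr ⟨t, Finset.mem_filter.mpr
        ⟨Finset.mem_univ t, h⟩, le_rfl⟩)
  have hδ2 : δ ≤ 2 := by
    refine (Finset.fold_max_le 2).mpr ⟨by norm_num, fun t _ => ?_⟩
    calc ∑ s', |P t (πstar t) s' - P t (πhat t) s'|
        ≤ ∑ s', (P t (πstar t) s' + P t (πhat t) s') := Finset.sum_le_sum fun s' _ => by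
          have := hP0 t (πstar t) s'; have := hP0 t (πhat t) s'
          rw [abs_sub_le_iff]; constructor <;> linarith
      _ = 2 := by rw [Finset.sum_add_distrib, hP1, hP1]; norm_num
  set c : ℝ := 1 - δ / 2 with hc
  have hc0 : 0 ≤ c := by simp only [hc]; linarith
  have hA0 : ∀ t s', 0 ≤ Astar t s' := fun t s' => hP0 t (πstar t) s'
  have hB0 : ∀ t s', 0 ≤ Bhat t s' := fun t s' => hP0 t (πhat t) s'
  have hA1 : ∀ t, ∑ s', Astar t s' = 1 := fun t => hP1 t (πstar t)
  have hB1 : ∀ t, ∑ s', Bhat t s' = 1 := fun t => hP1 t (πhat t)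
  intro s k hk
  induction k, hk using Nat.le_induction generalizing s with
  | base =>
    simp only [pow_one]
    have h1 := hrow s
    have h2 : 2 - 2 * c = δ := by rw [hc]; ring
    linarith
  | succ k hk ih =>
    have hrw : ∀ s', (Astar ^ (k + 1)) s s' - (Bhat ^ (k + 1)) s s' =
        (∑ t, (Astar ^ k) s t * Astar t s') - ∑ t, (Bhat ^ k) s t * Bhat t s' := by
      intro s'
      rw [pow_succ, pow_succ, Matrix.mul_apply, Matrix.mul_apply]
    have hmain := stepBound (fun t => (Astar ^ k) s t) (fun t => (Bhat ^ k) s t) Astar Bhat δ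
      (fun t => powEntryNonneg Astar hA0 k s t) (fun t => powEntryNonneg Bhat hB0 k s t)
      (powRowSum Astar hA1 k s) (powRowSum Bhat hB1 k s)
      hA0 hB0 hA1 hB1 hrow
    have hsum : ∑ s', |(Astar ^ (k + 1)) s s' - (Bhat ^ (k + 1)) s s'| ≤
        (∑ t, |(Astar ^ k) s t - (Bhat ^ k) s t|) +
          (1 - (∑ t, |(Astar ^ k) s t - (Bhat ^ k) s t|) / 2) * δ := by
      calc ∑ s', |(Astar ^ (k + 1)) s s' - (Bhat ^ (k + 1)) s s'|
          = ∑ s', |(∑ t, (Astar ^ k) s t * Astar t s') - ∑ t, (Bhat ^ k) s t * Bhat t s'| :=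
            Finset.sum_congr rfl fun s' _ => by rw [hrw s']
        _ ≤ _ := hmain
    have hIH := ih s
    have hck : (0:ℝ) ≤ c ^ k := pow_nonneg hc0 k
    have hpow : c ^ (k + 1) = c ^ k * c := pow_succ c k
    set d := ∑ t, |(Astar ^ k) s t - (Bhat ^ k) s t| with hd
    have goal2 : d + (1 - d / 2) * δ ≤ 2 - 2 * c ^ (k + 1) := by
      rw [hpow]
      have h1 : (2 - 2 * c ^ k - d) * c ≥ 0 := mul_nonneg (by linarith) hc0
      have hcval : c = 1 - δ / 2 := hc
      nlinarith [h1]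
    linarith
end
end

section
/- (State value decomposition across discount factors.) Let π be any policy on a finite MDP and let γ, γ' be discount factors with 0 ≤ γ ≤ γ' < 1. Then for every state s, V_{γ'}^π(s) = V_γ^π(s) + Σ_{k=1}^∞ (γ' − γ) γ'^{k−1} (P_π^k V_γ^π)(s), where the series on the right converges. -/
/-! Put `G_γ = ∑ₖ (γ P_π)^k`. A stochastic matrix has ℓ∞ operator norm at most `1`, so for
`|γ| < 1` this Neumann series converges to `(1 - γ P_π)⁻¹`, and `V_γ = G_γ R_π`. The resolvent
identity `G_{γ'} - G_γ = (γ' - γ) G_{γ'} P_π G_γ` then gives `V_{γ'} - V_γ`, and expanding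
`G_{γ'}` as a Neumann series gives the claimed series `∑ₖ (γ' - γ) γ'^k P_π^{k+1} V_γ`. -/

open Finset

noncomputable section

open Matrix

section
variable {𝔸 : Type*} [NormedRing 𝔸] [NormedAlgebra ℝ 𝔸] [HasSummableGeomSeries 𝔸]

theorem tsum_smul_pow_sub_tsum_smul_pow {x : 𝔸} {a b : ℝ} (ha : ‖a • x‖ < 1) (hb : ‖b • x‖ < 1) :
    ∑' k, (b • x) ^ k - ∑' k, (a • x) ^ k =
      (b - a) • ((∑' k, (b • x) ^ k) * x * ∑' k, (a • x) ^ k) := by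
  set Ga := ∑' k, (a • x) ^ k
  set Gb := ∑' k, (b • x) ^ k
  calc Gb - Ga = Gb * ((1 - a • x) * Ga) - Gb * (1 - b • x) * Ga := by
        rw [geom_series_mul_neg _ hb, mul_neg_geom_series _ ha, mul_one, one_mul]
    _ = (b - a) • (Gb * x * Ga) := by
        simp only [mul_sub, sub_mul, mul_one, one_mul, mul_smul_comm, smul_mul_assoc, sub_smul,
          mul_assoc]
        abel

theorem hasSum_smul_pow_mul_tsum_smul_pow {x : 𝔸} {a b : ℝ} (ha : ‖a • x‖ < 1)
    (hb : ‖b • x‖ < 1) :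
    HasSum (fun k => (b - a) • ((b • x) ^ k * (x * ∑' j, (a • x) ^ j)))
      (∑' k, (b • x) ^ k - ∑' k, (a • x) ^ k) := by
  rw [tsum_smul_pow_sub_tsum_smul_pow ha hb, mul_assoc]
  exact ((summable_geometric_of_norm_lt_one hb).hasSum.mul_right _).const_smul _

end

theorem HasSum.matrix_mulVec {ι m n R : Type*} [Fintype n] [NonUnitalNonAssocSemiring R]
    [TopologicalSpace R] [IsTopologicalSemiring R] {f : ι → Matrix m n R} {A : Matrix m n R}
    (h : HasSum f A) (v : n → R) : HasSum (fun i => f i *ᵥ v) (A *ᵥ v) :=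
  h.map (mulVec.addMonoidHomLeft v) (continuous_id.matrix_mulVec continuous_const)

theorem polMatrix_mem_rowStochastic {S A : Type*} [Fintype S] [DecidableEq S]
    {P : S → A → S → ℝ} (hP0 : ∀ s a s', 0 ≤ P s a s') (hP1 : ∀ s a, ∑ s', P s a s' = 1)
    (π : S → A) : polMatrix P π ∈ rowStochastic ℝ S :=
  mem_rowStochastic_iff_sum.mpr ⟨fun s s' => hP0 s (π s) s', fun s => hP1 s (π s)⟩

section
attribute [local instance] Matrix.linftyOpNormedRing Matrix.linftyOpNormedAlgebra

theorem Matrix.linfty_opNorm_le_one_of_mem_rowStochastic {n : Type*} [Fintype n] [DecidableEq n]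
    {M : Matrix n n ℝ} (hM : M ∈ rowStochastic ℝ n) : ‖M‖ ≤ 1 := by
  rw [linfty_opNorm_def, NNReal.coe_le_one, Finset.sup_le_iff]
  intro i _
  rw [← NNReal.coe_le_one]
  push_cast
  simp [Real.norm_of_nonneg (hM.1 _ _), sum_row_of_mem_rowStochastic hM]

theorem Matrix.linfty_opNorm_smul_lt_one_of_mem_rowStochastic {n : Type*} [Fintype n]
    [DecidableEq n] {M : Matrix n n ℝ} (hM : M ∈ rowStochastic ℝ n) {γ : ℝ} (hγ : |γ| < 1) :
    ‖γ • M‖ < 1 :=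
  calc ‖γ • M‖ ≤ |γ| * ‖M‖ := (norm_smul_le γ M).trans_eq (by rw [Real.norm_eq_abs])
    _ ≤ |γ| * 1 := by gcongr; exact linfty_opNorm_le_one_of_mem_rowStochastic hM
    _ < 1 := by rwa [mul_one]

variable {S A : Type*} [Fintype S] [DecidableEq S] {P : S → A → S → ℝ} {R : S → A → ℝ}

theorem valueVec_eq_tsum_smul_pow_mulVec {γ : ℝ} {π : S → A} (h : ‖γ • polMatrix P π‖ < 1) :
    valueVec P R γ π = (∑' k, (γ • polMatrix P π) ^ k) *ᵥ polReward R π := by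
  have hsum := (summable_geometric_of_norm_lt_one h).hasSum.matrix_mulVec (polReward R π)
  simp only [smul_pow, smul_mulVec] at hsum ⊢
  exact hsum.tsum_eq

theorem hasSum_valueVec_sub_valueVec (hP0 : ∀ s a s', 0 ≤ P s a s')
    (hP1 : ∀ s a, ∑ s', P s a s' = 1) {γ γ' : ℝ} (hγ1 : |γ| < 1) (hγ'1 : |γ'| < 1)
    (π : S → A) (s : S) :
    HasSum (fun k : ℕ => (γ' - γ) * γ' ^ k * (polMatrix P π ^ (k + 1) *ᵥ valueVec P R γ π) s)
      (valueVec P R γ' π s - valueVec P R γ π s) := by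
  have hM := polMatrix_mem_rowStochastic hP0 hP1 π
  have hγ := linfty_opNorm_smul_lt_one_of_mem_rowStochastic hM hγ1
  have hγ' := linfty_opNorm_smul_lt_one_of_mem_rowStochastic hM hγ'1
  have key := Pi.hasSum.mp
    ((hasSum_smul_pow_mul_tsum_smul_pow hγ hγ').matrix_mulVec (polReward R π)) s
  rw [valueVec_eq_tsum_smul_pow_mulVec hγ, valueVec_eq_tsum_smul_pow_mulVec hγ',
    ← Pi.sub_apply, ← sub_mulVec]
  simp only [smul_mulVec, smul_pow, smul_mul_assoc, ← mulVec_mulVec, pow_succ, Pi.smul_apply,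
    smul_eq_mul, mul_assoc] at key ⊢
  exact key

end

theorem value_decomposition_across_discounts_general
    {S A : Type*} [Fintype S] [DecidableEq S]
    (P : S → A → S → ℝ) (R : S → A → ℝ)
    (hP0 : ∀ s a s', 0 ≤ P s a s') (hP1 : ∀ s a, ∑ s', P s a s' = 1)
    (γ γ' : ℝ) (hγ0 : 0 ≤ γ) (hγγ' : γ ≤ γ') (hγ'1 : γ' < 1)
    (π : S → A) (s : S) :
    Summable (fun k : ℕ =>
        (γ' - γ) * γ' ^ k * (polMatrix P π ^ (k + 1)).mulVec (valueVec P R γ π) s) ∧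
    valueVec P R γ' π s =
      valueVec P R γ π s +
        ∑' k : ℕ, (γ' - γ) * γ' ^ k * (polMatrix P π ^ (k + 1)).mulVec (valueVec P R γ π) s := by
  have hγ_abs : |γ| < 1 := abs_lt.2 ⟨by linarith, by linarith⟩
  have hγ'_abs : |γ'| < 1 := abs_lt.2 ⟨by linarith, hγ'1⟩
  have h := hasSum_valueVec_sub_valueVec (R := R) hP0 hP1 hγ_abs hγ'_abs π s
  exact ⟨h.summable, by rw [h.tsum_eq, add_sub_cancel]⟩

/-- **State value decomposition across discount factors.**
For any policy `π` and discounts `0 ≤ γ ≤ γ' < 1`, for every state `s`,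
`V_{γ'}^π(s) = V_γ^π(s) + Σ_{k=1}^∞ (γ' − γ) γ'^{k−1} (P_π^k V_γ^π)(s)`
(the series, indexed below by `k : ℕ` standing for `k+1 ≥ 1`, converges). -/
theorem value_decomposition_across_discounts
    {S A : Type*} [Fintype S] [DecidableEq S] [Nonempty S] [Fintype A] [Nonempty A]
    (P : S → A → S → ℝ) (R : S → A → ℝ) (Rmax : ℝ)
    (hP0 : ∀ s a s', 0 ≤ P s a s') (hP1 : ∀ s a, ∑ s', P s a s' = 1)
    (hRmax : 0 ≤ Rmax) (hR0 : ∀ s a, 0 ≤ R s a) (hR1 : ∀ s a, R s a ≤ Rmax)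
    (γ γ' : ℝ) (hγ0 : 0 ≤ γ) (hγγ' : γ ≤ γ') (hγ'1 : γ' < 1)
    (π : S → A) (s : S) :
    Summable (fun k : ℕ =>
        (γ' - γ) * γ' ^ k * (polMatrix P π ^ (k + 1)).mulVec (valueVec P R γ π) s) ∧
    valueVec P R γ' π s =
      valueVec P R γ π s +
        ∑' k : ℕ, (γ' - γ) * γ' ^ k * (polMatrix P π ^ (k + 1)).mulVec (valueVec P R γ π) s :=
  value_decomposition_across_discounts_general P R hP0 hP1 γ γ' hγ0 hγγ' hγ'1 π s
end
end

section
/- (Action variation under partial observability.) Let S, A, Σ, H be nonempty finite sets (states, actions, compressed histories, histories). For each s ∈ S and a ∈ A let P(·|s,a) be a probability vector on S; for each σ ∈ Σ let D_σ be a probability vector on H; for each H' ∈ H let b_{H'} be a probability vector on S (belief); and for each s' ∈ S and H' ∈ H let q_{s',H'} be a probability vector on Σ. Define the abstract transition probabilities P^φ(σ'|σ,a) = Σ_{H'∈H} D_σ(H') Σ_{s∈S} Σ_{s'∈S} b_{H'}(s) P(s'|s,a) q_{s',H'}(σ'). Then max_{σ∈Σ} max_{a,a'∈A} Σ_{σ'∈Σ}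 |P^φ(σ'|σ,a) − P^φ(σ'|σ,a')| ≤ max_{s∈S} max_{a,a'∈A} ||P(·|s,a) − P(·|s,a')||_1. -/
open Finset

/-- **Action variation under partial observability.**
With abstract transitions `P^φ(σ'|σ,a) = Σ_{H'} D_σ(H') Σ_s Σ_{s'} b_{H'}(s) P(s'|s,a) q_{s',H'}(σ')`,
the action variation of the abstraction is bounded by the action variation of the underlying MDP:
`max_{σ} max_{a,a'} Σ_{σ'} |P^φ(σ'|σ,a) − P^φ(σ'|σ,a')| ≤ max_s max_{a,a'} ‖P(·|s,a) − P(·|s,a')‖₁`. -/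
theorem action_variation_partial_observability
    {S A Sig H : Type*} [Fintype S] [Nonempty S] [Fintype A] [Nonempty A]
    [Fintype Sig] [Nonempty Sig] [Fintype H] [Nonempty H]
    (P : S → A → S → ℝ)
    (hP0 : ∀ s a s', 0 ≤ P s a s') (hP1 : ∀ s a, ∑ s', P s a s' = 1)
    (D : Sig → H → ℝ) (hD0 : ∀ σ H', 0 ≤ D σ H') (hD1 : ∀ σ, ∑ H', D σ H' = 1)
    (b : H → S → ℝ) (hb0 : ∀ H' s, 0 ≤ b H' s) (hb1 : ∀ H', ∑ s, b H' s = 1)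
    (q : S → H → Sig → ℝ) (hq0 : ∀ s' H' σ', 0 ≤ q s' H' σ') (hq1 : ∀ s' H', ∑ σ', q s' H' σ' = 1) :
    ((Finset.univ : Finset Sig).sup' Finset.univ_nonempty fun σ =>
      (Finset.univ : Finset (A × A)).sup' Finset.univ_nonempty fun aa =>
        ∑ σ', |(∑ H', D σ H' * ∑ s, ∑ s', b H' s * P s aa.1 s' * q s' H' σ')
            - (∑ H', D σ H' * ∑ s, ∑ s', b H' s * P s aa.2 s' * q s' H' σ')|) ≤
    ((Finset.univ : Finset S).sup' Finset.univ_nonempty fun s =>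
      (Finset.univ : Finset (A × A)).sup' Finset.univ_nonempty fun aa =>
        ∑ s', |P s aa.1 s' - P s aa.2 s'|) := by
  apply Finset.sup'_le
  intro σ _
  apply Finset.sup'_le
  intro aa _
  set M := ((Finset.univ : Finset S).sup' Finset.univ_nonempty fun s =>
      (Finset.univ : Finset (A × A)).sup' Finset.univ_nonempty fun aa =>
        ∑ s', |P s aa.1 s' - P s aa.2 s'|) with hMdef
  have hM : ∀ s : S, ∑ s', |P s aa.1 s' - P s aa.2 s'| ≤ M := fun s =>
    (Finset.le_sup' (fun aa : A × A => ∑ s', |P s aa.1 s' - P s aa.2 s'|)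
      (Finset.mem_univ aa)).trans
      (Finset.le_sup' (fun s : S => (Finset.univ : Finset (A × A)).sup'
        Finset.univ_nonempty fun aa : A × A => ∑ s', |P s aa.1 s' - P s aa.2 s'|)
        (Finset.mem_univ s))
  calc ∑ σ', |(∑ H', D σ H' * ∑ s, ∑ s', b H' s * P s aa.1 s' * q s' H' σ')
          - (∑ H', D σ H' * ∑ s, ∑ s', b H' s * P s aa.2 s' * q s' H' σ')|
      ≤ ∑ σ', ∑ H', ∑ s, ∑ s',
          D σ H' * b H' s * |P s aa.1 s' - P s aa.2 s'| * q s' H' σ' := by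
        apply Finset.sum_le_sum; intro σ' _
        have heq : (∑ H', D σ H' * ∑ s, ∑ s', b H' s * P s aa.1 s' * q s' H' σ')
            - (∑ H', D σ H' * ∑ s, ∑ s', b H' s * P s aa.2 s' * q s' H' σ')
            = ∑ H', ∑ s, ∑ s',
                D σ H' * b H' s * (P s aa.1 s' - P s aa.2 s') * q s' H' σ' := by
          rw [← Finset.sum_sub_distrib]
          apply Finset.sum_congr rfl; intro H' _
          rw [← mul_sub, ← Finset.sum_sub_distrib, Finset.mul_sum]
          apply Finset.sum_congr rfl; intro s _
          rw [← Finset.sum_sub_distrib, Finset.mul_sum]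
          apply Finset.sum_congr rfl; intro s' _
          ring
        rw [heq]
        refine (Finset.abs_sum_le_sum_abs _ _).trans ?_
        apply Finset.sum_le_sum; intro H' _
        refine (Finset.abs_sum_le_sum_abs _ _).trans ?_
        apply Finset.sum_le_sum; intro s _
        refine (Finset.abs_sum_le_sum_abs _ _).trans ?_
        apply Finset.sum_le_sum; intro s' _
        rw [abs_mul, abs_mul, abs_mul,
          abs_of_nonneg (hD0 σ H'), abs_of_nonneg (hb0 H' s),
          abs_of_nonneg (hq0 s' H' σ')]
    _ = ∑ H', ∑ s, D σ H' * b H' s * ∑ s', |P s aa.1 s' - P s aa.2 s'| := by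
        rw [Finset.sum_comm]
        apply Finset.sum_congr rfl; intro H' _
        rw [Finset.sum_comm]
        apply Finset.sum_congr rfl; intro s _
        rw [Finset.sum_comm, Finset.mul_sum]
        apply Finset.sum_congr rfl; intro s' _
        rw [← Finset.mul_sum, hq1, mul_one]
    _ ≤ ∑ H', ∑ s, D σ H' * b H' s * M := by
        apply Finset.sum_le_sum; intro H' _
        apply Finset.sum_le_sum; intro s _
        exact mul_le_mul_of_nonneg_left (hM s)
          (mul_nonneg (hD0 σ H') (hb0 H' s))
    _ = M := by
        have : ∀ H' : H, ∑ s, D σ H' * b H' s * M = D σ H' * M := by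
          intro H'
          calc ∑ s, D σ H' * b H' s * M = D σ H' * M * ∑ s, b H' s := by
                rw [Finset.mul_sum]; apply Finset.sum_congr rfl; intro s _; ring
            _ = D σ H' * M := by rw [hb1, mul_one]
        rw [Finset.sum_congr rfl fun H' _ => this H', ← Finset.sum_mul, hD1, one_mul]
end
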